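/- arXiv:1510.03878 — 3 statements merged into one kernel-verified Lean document; each statement's English description precedes it below -/
import Mathlib

section
/- Let (η, ε) ∈ ℝ × ℝ³ with η² + ‖ε‖² = 1, let 0 < k < 1/√2, and let u ∈ ℝ³ be a unit vector. Define ε_q := k η ‖ε‖² u + √(1 − k²‖ε‖⁴) ε + k ‖ε‖² (ε × u). Then ‖ε_q‖² ≥ ‖ε‖² (1 − k² − k√(1 − k²)), and the constant 1 − k² − k√(1 − k²) is strictly positive. -/
open Matrix

noncomputable section

/-- Skew-symmetric matrix `[x]ₓ` such that `[x]ₓ y = x × y`. -/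
def skew (x : Fin 3 → ℝ) : Matrix (Fin 3) (Fin 3) ℝ :=
  !![0, -x 2, x 1; x 2, 0, -x 0; -x 1, x 0, 0]

/-- The special orthogonal group SO(3): `RᵀR = I` and `det R = 1`. -/
def SO3 (R : Matrix (Fin 3) (Fin 3) ℝ) : Prop :=
  Rᵀ * R = 1 ∧ R.det = 1

/-- Euclidean inner product on ℝ³. -/
def dotp (x y : Fin 3 → ℝ) : ℝ := ∑ i, x i * y i

/-- Squared Euclidean norm on ℝ³. -/
def norm2 (x : Fin 3 → ℝ) : ℝ := dotp x x

/-- Vector cross product on ℝ³. -/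
def cross (x y : Fin 3 → ℝ) : Fin 3 → ℝ :=
  ![x 1 * y 2 - x 2 * y 1, x 2 * y 0 - x 0 * y 2, x 0 * y 1 - x 1 * y 0]

/-- `ψ(A) = vex(P_a(A))`: the vex of the skew-symmetric part of `A`. -/
def psi (A : Matrix (Fin 3) (Fin 3) ℝ) : Fin 3 → ℝ :=
  ![(A 2 1 - A 1 2) / 2, (A 0 2 - A 2 0) / 2, (A 1 0 - A 0 1) / 2]

/-- Normalized attitude distance squared `|X|_I² = tr(I − X)/4`. -/
def attDist2 (X : Matrix (Fin 3) (Fin 3) ℝ) : ℝ := (1 - X).trace / 4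

/-- Rodrigues rotation matrix `𝓡(θ,u) = I + sin θ [u]ₓ + (1 − cos θ)[u]ₓ²`. -/
def rodrigues (θ : ℝ) (u : Fin 3 → ℝ) : Matrix (Fin 3) (Fin 3) ℝ :=
  1 + Real.sin θ • skew u + (1 - Real.cos θ) • (skew u * skew u)

/-!
`ε_q` is the vector part of the unit quaternion `(η, ε) * (√(1 - k²‖ε‖⁴), k‖ε‖² u)`, so
`‖ε_q‖² = 1 - η_q²`. Writing `‖ε‖ = sin α` and `k‖ε‖² = sin β`, the scalar part satisfies
`|η_q| ≤ cos (α - β)`, and `sin² (α - β) = sin² α (cos β - k sin α cos α)²`, where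
`cos β ≥ √(1 - k²)` and `sin α cos α ≤ 1/2`; so `‖ε_q‖² ≥ ‖ε‖² (√(1 - k²) - k/2)²`, which beats
the claimed bound.
-/

lemma norm2_eq_sum_sq (x : Fin 3 → ℝ) : norm2 x = x 0 ^ 2 + x 1 ^ 2 + x 2 ^ 2 := by
  simp only [norm2, dotp, Fin.sum_univ_three]
  ring

lemma norm2_nonneg (x : Fin 3 → ℝ) : 0 ≤ norm2 x := by
  rw [norm2_eq_sum_sq]
  positivity

lemma norm2_cross (x y : Fin 3 → ℝ) : norm2 (cross x y) = norm2 x * norm2 y - dotp x y ^ 2 := by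
  simp [norm2, dotp, cross, Fin.sum_univ_three]
  ring

lemma dotp_sq_le (x y : Fin 3 → ℝ) : dotp x y ^ 2 ≤ norm2 x * norm2 y := by
  have := norm2_nonneg (cross x y)
  rw [norm2_cross] at this
  linarith

/-- Multiplicativity of the quaternion norm, for the product `(η, ε) * (c, a u)`. -/
lemma norm2_quaternion_mul_im (η c a : ℝ) (ε u : Fin 3 → ℝ) :
    norm2 ((η * a) • u + c • ε + a • cross ε u) + (η * c - a * dotp ε u) ^ 2 =
      (η ^ 2 + norm2 ε) * (c ^ 2 + a ^ 2 * norm2 u) := by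
  simp [norm2, dotp, cross, Fin.sum_univ_three]
  ring

/-- With `p = cos α`, `m = sin α`, `s = cos β` and `k m² = sin β`, this is
`sin² (α - β) = sin² α (cos β - k sin α cos α)²`. -/
lemma one_sub_sq_eq_sq_mul_sq {p m s k : ℝ} (hpm : p ^ 2 + m ^ 2 = 1)
    (hs : s ^ 2 + (k * m ^ 2) ^ 2 = 1) :
    1 - (p * s + k * m ^ 2 * m) ^ 2 = m ^ 2 * (s - k * m * p) ^ 2 := by
  linear_combination (-s ^ 2 - k ^ 2 * m ^ 4) * hpm - hs

lemma mul_le_one_sub_sq {η N d k : ℝ} (hN : 0 ≤ N) (hq : η ^ 2 + N = 1) (hd : d ^ 2 ≤ N)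
    (hk0 : 0 ≤ k) (hk : 5 * k ^ 2 ≤ 4) :
    N * (1 - k ^ 2 - k * √(1 - k ^ 2)) ≤ 1 - (η * √(1 - k ^ 2 * N ^ 2) - k * N * d) ^ 2 := by
  set s := √(1 - k ^ 2 * N ^ 2)
  set r := √(1 - k ^ 2)
  set m := √N
  have hN1 : N ≤ 1 := by nlinarith
  have hm2 : m ^ 2 = N := Real.sq_sqrt hN
  have hp2 : |η| ^ 2 = 1 - N := by rw [sq_abs]; linarith
  have hkN : k ^ 2 * N ^ 2 ≤ k ^ 2 := mul_le_of_le_one_right (sq_nonneg k) (pow_le_one₀ hN hN1)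
  have hs2 : s ^ 2 = 1 - k ^ 2 * N ^ 2 := Real.sq_sqrt (by linarith)
  have hr2 : r ^ 2 = 1 - k ^ 2 := Real.sq_sqrt (by linarith)
  have hrs : r ≤ s := Real.sqrt_le_sqrt (by linarith)
  have hkr : k / 2 ≤ r := Real.le_sqrt_of_sq_le (by nlinarith)
  have hmp : m * |η| ≤ 1 / 2 := by nlinarith [two_mul_le_add_sq m |η|]
  have hdm : |d| ≤ m := Real.abs_le_sqrt hd
  have hbound : |η * s - k * N * d| ≤ |η| * s + k * m ^ 2 * m := calc
    |η * s - k * N * d| ≤ |η * s| + |k * N * d| := abs_sub _ _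
    _ = |η| * s + k * N * |d| := by
      rw [abs_mul, abs_mul, abs_mul, abs_of_nonneg hk0, abs_of_nonneg hN,
        abs_of_nonneg (Real.sqrt_nonneg _)]
    _ ≤ |η| * s + k * m ^ 2 * m := by rw [hm2]; gcongr
  have hfactor : r ^ 2 - k * r ≤ (s - k * m * |η|) ^ 2 := by
    have : r - k / 2 ≤ s - k * m * |η| := by nlinarith
    nlinarith
  calc N * (1 - k ^ 2 - k * r) = m ^ 2 * (r ^ 2 - k * r) := by rw [hm2, hr2]
    _ ≤ m ^ 2 * (s - k * m * |η|) ^ 2 := by gcongr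
    _ = 1 - (|η| * s + k * m ^ 2 * m) ^ 2 :=
      (one_sub_sq_eq_sq_mul_sq (by rw [hp2, hm2]; ring) (by rw [hs2, hm2]; ring)).symm
    _ ≤ 1 - (η * s - k * N * d) ^ 2 :=
      sub_le_sub_left (sq_le_sq' (abs_le.mp hbound).1 (abs_le.mp hbound).2) 1

lemma one_sub_sq_sub_mul_sqrt_pos {k : ℝ} (hk : 2 * k ^ 2 < 1) :
    0 < 1 - k ^ 2 - k * √(1 - k ^ 2) := by
  have hr2 : √(1 - k ^ 2) ^ 2 = 1 - k ^ 2 := Real.sq_sqrt (by nlinarith)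
  have hkr : k < √(1 - k ^ 2) := Real.lt_sqrt_of_sq_lt (by linarith)
  nlinarith [Real.sqrt_nonneg (1 - k ^ 2)]

/-- For a unit quaternion `(η, ε)`, `0 < k < 1/√2` and a unit
vector `u`, the warped vector part `ε_q` satisfies
`‖ε_q‖² ≥ ‖ε‖² (1 − k² − k√(1 − k²))`, and `1 − k² − k√(1 − k²) > 0`. -/
theorem stmt10 (η k : ℝ) (ε u : Fin 3 → ℝ) (hq : η ^ 2 + norm2 ε = 1)
    (hk0 : 0 < k) (hk : k < 1 / Real.sqrt 2) (hu : norm2 u = 1) :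
    norm2 ε * (1 - k ^ 2 - k * Real.sqrt (1 - k ^ 2)) ≤
        norm2 ((k * η * norm2 ε) • u +
          Real.sqrt (1 - k ^ 2 * norm2 ε ^ 2) • ε + (k * norm2 ε) • cross ε u) ∧
      0 < 1 - k ^ 2 - k * Real.sqrt (1 - k ^ 2) := by
  have hk2 : 2 * k ^ 2 < 1 := by
    have hks : (k * √2) ^ 2 < 1 :=
      pow_lt_one₀ (by positivity) ((lt_div_iff₀ (by positivity)).mp hk) two_ne_zero
    rwa [mul_pow, Real.sq_sqrt zero_le_two, mul_comm] at hks
  refine ⟨?_, one_sub_sq_sub_mul_sqrt_pos hk2⟩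
  have hN := norm2_nonneg ε
  have hd : dotp ε u ^ 2 ≤ norm2 ε := by simpa [hu] using dotp_sq_le ε u
  have hkN : k ^ 2 * norm2 ε ^ 2 ≤ 1 := by nlinarith
  have hunit := norm2_quaternion_mul_im η √(1 - k ^ 2 * norm2 ε ^ 2) (k * norm2 ε) ε u
  rw [hq, hu, Real.sq_sqrt (sub_nonneg.mpr hkN), mul_one, mul_pow, sub_add_cancel, one_mul,
    show η * (k * norm2 ε) = k * η * norm2 ε by ring] at hunit
  have := mul_le_one_sub_sq hN hq hd hk0.le (by linarith)
  linarith
end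
end

section
/- Let 0 < k < 1/√2 and let u ∈ ℝ³ be a unit vector. For R ∈ SO(3), define Γ(R) := R 𝓡(2 arcsin(k |R|_I²), u), where 𝓡(θ,u) = I + sin θ [u]ₓ + (1 − cos θ)[u]ₓ². Then with α₁ := (1 − k² − k√(1 − k²))/2 and α₂ := 1 + k + k²/4, one has α₁ |R|_I² ≤ 1 − √(1 − |Γ(R)|_I²) ≤ α₂ |R|_I² for all R ∈ SO(3). -/
/-!
Represent `R ∈ SO(3)` by a unit quaternion `(η, ε)`, so that `|R|_I² = 1 - η² = |ε|²`. The rotation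
`𝓡(2φ, u)` is the unit quaternion `(cos φ, sin φ • u)`, and `1 - |Γ(R)|_I²` is the square of the
scalar part `η cos φ - (ε ⬝ u) sin φ` of their product. Only `η` and `c = ε ⬝ u` are needed; they
are read off from `tr R = 4η² - 1`, `uᵀRu = 2η² - 1 + 2c²` and `ψ(R) ⬝ u = 2ηc`. With
`x = |R|_I²`, `sin φ = k x` and `c² ≤ x`, both bounds become elementary inequalities: the triangle
inequality for `|η √(1 - k²x²) - c k x|`, followed by polynomial estimates in `x`.
-/

open Matrix

open Real

theorem attDist2_eq (R : Matrix (Fin 3) (Fin 3) ℝ) : attDist2 R = (3 - R.trace) / 4 := by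
  simp [attDist2, trace_sub]

theorem skew_mul_skew (u : Fin 3 → ℝ) : skew u * skew u = vecMulVec u u - norm2 u • 1 := by
  ext i j
  fin_cases i <;> fin_cases j <;>
    simp [skew, vecMulVec_apply, norm2, dotp, mul_apply, Fin.sum_univ_three] <;> ring

theorem trace_mul_skew (R : Matrix (Fin 3) (Fin 3) ℝ) (u : Fin 3 → ℝ) :
    (R * skew u).trace = -2 * dotp (psi R) u := by
  simp only [trace_fin_three, mul_apply, Fin.sum_univ_three, skew, psi, dotp, of_apply, cons_val',
    cons_val_zero, cons_val_one, cons_val, cons_val_fin_one]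
  ring

theorem attDist2_mul_rodrigues (R : Matrix (Fin 3) (Fin 3) ℝ) (θ : ℝ) {u : Fin 3 → ℝ}
    (hu : norm2 u = 1) :
    attDist2 (R * rodrigues θ u) =
      (3 - (cos θ * R.trace + (1 - cos θ) * dotp u (R *ᵥ u) - 2 * sin θ * dotp (psi R) u)) / 4 := by
  rw [attDist2_eq, rodrigues, skew_mul_skew, hu, one_smul, mul_add, mul_add, mul_one,
    Matrix.mul_smul, Matrix.mul_smul, mul_sub, mul_one, mul_vecMulVec, trace_add, trace_add,
    trace_smul, trace_smul, trace_sub, trace_vecMulVec, trace_mul_skew, dotProduct_comm]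
  simp only [dotp, dotProduct, smul_eq_mul]
  ring

theorem abs_dotp_le_one {u v : Fin 3 → ℝ} (hu : norm2 u = 1) (hv : norm2 v = 1) :
    |dotp u v| ≤ 1 := by
  simp only [norm2, dotp, Fin.sum_univ_three] at hu hv ⊢
  rw [abs_le]
  constructor
  · nlinarith [sq_nonneg (u 0 + v 0), sq_nonneg (u 1 + v 1), sq_nonneg (u 2 + v 2)]
  · nlinarith [sq_nonneg (u 0 - v 0), sq_nonneg (u 1 - v 1), sq_nonneg (u 2 - v 2)]

theorem one_sub_attDist2_mul_rodrigues {R : Matrix (Fin 3) (Fin 3) ℝ} {u : Fin 3 → ℝ}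
    (hu : norm2 u = 1) {η c : ℝ} (hT : R.trace = 4 * η ^ 2 - 1)
    (hq : dotp u (R *ᵥ u) = 2 * η ^ 2 - 1 + 2 * c ^ 2) (hp : dotp (psi R) u = 2 * η * c)
    (φ : ℝ) : 1 - attDist2 (R * rodrigues (2 * φ) u) = (η * cos φ - c * sin φ) ^ 2 := by
  rw [attDist2_mul_rodrigues _ _ hu, hT, hq, hp, cos_two_mul, sin_two_mul]
  linear_combination -c ^ 2 * sin_sq_add_cos_sq φ

namespace SO3

variable {R : Matrix (Fin 3) (Fin 3) ℝ}

theorem transpose (hR : SO3 R) : SO3 Rᵀ :=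
  ⟨by rw [transpose_transpose]; exact mul_eq_one_comm.mp hR.1, by rw [det_transpose]; exact hR.2⟩

theorem transpose_eq_adjugate (hR : SO3 R) : Rᵀ = adjugate R := by
  rw [← inv_eq_left_inv hR.1, inv_def, hR.2, Ring.inverse_one, one_smul]

theorem sum_sq_col (hR : SO3 R) (j : Fin 3) : R 0 j ^ 2 + R 1 j ^ 2 + R 2 j ^ 2 = 1 := by
  simpa [mul_apply, Fin.sum_univ_three, sq] using congrFun₂ hR.1 j j

theorem norm2_mulVec (hR : SO3 R) (v : Fin 3 → ℝ) : norm2 (R *ᵥ v) = norm2 v := by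
  change (R *ᵥ v) ⬝ᵥ (R *ᵥ v) = v ⬝ᵥ v
  rw [dotProduct_mulVec, ← vecMul_transpose, vecMul_vecMul, hR.1, vecMul_one]

theorem abs_dotp_mulVec_le_one (hR : SO3 R) {u : Fin 3 → ℝ} (hu : norm2 u = 1) :
    |dotp u (R *ᵥ u)| ≤ 1 :=
  abs_dotp_le_one hu ((hR.norm2_mulVec u).trans hu)

theorem trace_le_three (hR : SO3 R) : R.trace ≤ 3 := by
  have h0 := hR.sum_sq_col 0
  have h1 := hR.sum_sq_col 1
  have h2 := hR.sum_sq_col 2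
  rw [trace_fin_three]
  nlinarith [sq_nonneg (R 0 0 - 1), sq_nonneg (R 1 1 - 1), sq_nonneg (R 2 2 - 1),
    sq_nonneg (R 1 0), sq_nonneg (R 2 0), sq_nonneg (R 0 1), sq_nonneg (R 2 1),
    sq_nonneg (R 0 2), sq_nonneg (R 1 2)]

theorem dotp_psi_sq_eq (hR : SO3 R) {u : Fin 3 → ℝ} (hu : norm2 u = 1) :
    dotp (psi R) u ^ 2 =
      (1 + R.trace) * ((3 - R.trace) / 4 - (1 - dotp u (R *ᵥ u)) / 2) := by
  have hRu := (hR.norm2_mulVec u).trans hu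
  have hRtu := (hR.transpose.norm2_mulVec u).trans hu
  have h0 := hR.sum_sq_col 0
  have h1 := hR.sum_sq_col 1
  have h2 := hR.sum_sq_col 2
  have hk := Matrix.ext_iff.mpr hR.transpose_eq_adjugate
  simp only [Fin.forall_fin_succ, IsEmpty.forall_iff, adjugate_fin_three, transpose_apply,
    of_apply, cons_val', cons_val_fin_one, cons_val_zero, cons_val_succ, Fin.succ_zero_eq_one,
    Fin.succ_one_eq_two, and_true] at hk
  obtain ⟨⟨k00, k10, k20⟩, ⟨k01, k11, k21⟩, k02, k12, k22⟩ := hk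
  simp only [norm2, dotp, psi, Fin.sum_univ_three, cons_val_zero, cons_val_one, cons_val,
    trace_fin_three, mulVec, dotProduct, transpose_apply] at hRu hRtu hu ⊢
  -- for the rotation by `ϑ` about `n`, both sides are `sin² ϑ (n ⬝ u)²`
  linear_combination
    ((R 2 1 - R 1 2) ^ 2 / 4 + (R 0 2 - R 2 0) ^ 2 / 4 + (R 1 0 - R 0 1) ^ 2 / 4
        - (R 0 0 + R 1 1 + R 2 2) / 2) * hu
      + (h0 + h1 + h2 - 2 * k00 - 2 * k11 - 2 * k22 - hRu - hRtu) / 4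
      + ((u 1 ^ 2 + u 2 ^ 2) * k00 + (u 0 ^ 2 + u 2 ^ 2) * k11 + (u 0 ^ 2 + u 1 ^ 2) * k22
        - u 0 * u 1 * (k01 + k10) - u 0 * u 2 * (k02 + k20) - u 1 * u 2 * (k12 + k21)) / 2

theorem exists_quaternion (hR : SO3 R) {u : Fin 3 → ℝ} (hu : norm2 u = 1) :
    ∃ η c : ℝ, R.trace = 4 * η ^ 2 - 1 ∧ dotp u (R *ᵥ u) = 2 * η ^ 2 - 1 + 2 * c ^ 2 ∧
      dotp (psi R) u = 2 * η * c := by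
  have hp := hR.dotp_psi_sq_eq hu
  obtain ⟨hq₁, hq₂⟩ := abs_le.mp (hR.abs_dotp_mulVec_le_one hu)
  have hT : -1 ≤ R.trace := by nlinarith [sq_nonneg (dotp (psi R) u), hR.trace_le_three]
  rcases hT.eq_or_lt with hT | hT
  · refine ⟨0, √((1 + dotp u (R *ᵥ u)) / 2), by linarith, ?_, ?_⟩
    · rw [sq_sqrt (by linarith)]; ring
    · rw [← hT] at hp
      simpa using hp
  · obtain ⟨η, hη, hTη⟩ : ∃ η : ℝ, 0 < η ∧ R.trace = 4 * η ^ 2 - 1 :=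
      ⟨√((1 + R.trace) / 4), sqrt_pos.mpr (by linarith), by rw [sq_sqrt (by linarith)]; ring⟩
    rw [hTη] at hp
    refine ⟨η, dotp (psi R) u / (2 * η), hTη, ?_, by field_simp⟩
    field_simp
    linear_combination -hp

theorem exists_one_sub_attDist2_mul_rodrigues (hR : SO3 R) {u : Fin 3 → ℝ}
    (hu : norm2 u = 1) :
    ∃ η c : ℝ, η ^ 2 = 1 - attDist2 R ∧ c ^ 2 ≤ attDist2 R ∧
      ∀ φ, 1 - attDist2 (R * rodrigues (2 * φ) u) = (η * cos φ - c * sin φ) ^ 2 := by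
  obtain ⟨η, c, hT, hq, hp⟩ := hR.exists_quaternion hu
  have hq₁ := (abs_le.mp (hR.abs_dotp_mulVec_le_one hu)).2
  refine ⟨η, c, ?_, ?_, one_sub_attDist2_mul_rodrigues hu hT hq hp⟩ <;>
    rw [attDist2_eq, hT] <;> linarith

end SO3

theorem quadratic_lower_bound {k x η c : ℝ} (hk0 : 0 ≤ k) (hk : 2 * k ^ 2 ≤ 1)
    (hη : η ^ 2 = 1 - x) (hc : c ^ 2 ≤ x) :
    (1 - k ^ 2 - k * √(1 - k ^ 2)) / 2 * x ≤ 1 - |η * √(1 - (k * x) ^ 2) - c * (k * x)| := by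
  have hx0 : 0 ≤ x := (sq_nonneg c).trans hc
  have hx1 : x ≤ 1 := by linarith [sq_nonneg η]
  have hkx : 0 ≤ 1 - (k * x) ^ 2 := by
    nlinarith [mul_nonneg hk0 hx0, mul_le_one₀ (by nlinarith : k ≤ 1) hx0 hx1]
  set m := √(1 - (k * x) ^ 2)
  have hm : m ^ 2 = 1 - (k * x) ^ 2 := sq_sqrt hkx
  set r := √(1 - k ^ 2)
  have hr : r ^ 2 = 1 - k ^ 2 := sq_sqrt (by linarith)
  have hkr : k ≤ r := by nlinarith [sqrt_nonneg (1 - k ^ 2)]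
  -- `|2 η m c| ≤ 2 √(x (1 - x) (1 - k²x²))` is bounded by a quadratic in `x`; this is where
  -- `√(1 - k²)` enters the constant.
  have hpoly : 4 * x * (1 - x) * (1 - (k * x) ^ 2) ≤ (k * (1 + x - 2 * x ^ 2) + r) ^ 2 := by
    have h1x2 : 0 ≤ 1 + x - 2 * x ^ 2 := by nlinarith
    nlinarith [mul_nonneg (mul_nonneg (by linarith : (0:ℝ) ≤ 2 * k) (sub_nonneg.mpr hkr)) h1x2,
      mul_nonneg (by linarith : (0:ℝ) ≤ 1 - 2 * k ^ 2) (sq_nonneg (1 - 2 * x)),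
      mul_nonneg (sq_nonneg k) (sq_nonneg (x - 2))]
  have hcross : |2 * (η * m * c)| ≤ k * (1 + x - 2 * x ^ 2) + r := by
    refine abs_le_of_sq_le_sq ?_ (by nlinarith)
    calc (2 * (η * m * c)) ^ 2 = 4 * (1 - x) * (1 - (k * x) ^ 2) * c ^ 2 := by
          rw [mul_pow, mul_pow, mul_pow, hη, hm]; ring
      _ ≤ 4 * (1 - x) * (1 - (k * x) ^ 2) * x := by gcongr
      _ ≤ _ := by linarith
  refine le_sub_comm.mp (abs_le_of_sq_le_sq ?_ ?_)
  · calc (η * m - c * (k * x)) ^ 2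
          = (1 - x) * (1 - (k * x) ^ 2) + c ^ 2 * (k * x) ^ 2 - k * x * (2 * (η * m * c)) := by
            linear_combination m ^ 2 * hη + (1 - x) * hm
      _ ≤ (1 - x) * (1 - (k * x) ^ 2) + x * (k * x) ^ 2
            + k * x * (k * (1 + x - 2 * x ^ 2) + r) := by
            nlinarith [mul_le_mul_of_nonneg_right hc (sq_nonneg (k * x)),
              mul_le_mul_of_nonneg_left ((neg_le_abs _).trans hcross) (mul_nonneg hk0 hx0)]
      _ = 1 - 2 * ((1 - k ^ 2 - k * r) / 2 * x) := by ring
      _ ≤ (1 - (1 - k ^ 2 - k * r) / 2 * x) ^ 2 := by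
            nlinarith [sq_nonneg ((1 - k ^ 2 - k * r) / 2 * x)]
  · nlinarith [mul_nonneg (add_nonneg (sq_nonneg k) (mul_nonneg hk0 (sqrt_nonneg (1 - k ^ 2))))
      hx0]

theorem quadratic_upper_bound {k x η c : ℝ} (hk0 : 0 ≤ k) (hk1 : k ≤ 1)
    (hη : η ^ 2 = 1 - x) (hc : c ^ 2 ≤ x) :
    1 - |η * √(1 - (k * x) ^ 2) - c * (k * x)| ≤ (1 + k + k ^ 2 / 4) * x := by
  have hx0 : 0 ≤ x := (sq_nonneg c).trans hc
  have hx1 : x ≤ 1 := by linarith [sq_nonneg η]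
  set m := √(1 - (k * x) ^ 2)
  have hkx : k * x ≤ 1 := mul_le_one₀ hk1 hx0 hx1
  have hm : m ^ 2 = 1 - (k * x) ^ 2 := sq_sqrt (by nlinarith [mul_nonneg hk0 hx0])
  have hm1 : m ≤ 1 := sqrt_le_one.mpr (by nlinarith)
  have ha : (|η| * m) ^ 2 = (1 - x) * (1 - (k * x) ^ 2) := by rw [mul_pow, sq_abs, hη, hm]
  have ha1 : |η| * m ≤ 1 := by
    have : |η| ≤ 1 := abs_le_one_iff_mul_self_le_one.mpr (by nlinarith)
    exact mul_le_one₀ this (sqrt_nonneg _) hm1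
  have hc1 : |c| ≤ 1 := abs_le_one_iff_mul_self_le_one.mpr (by nlinarith)
  have hdiff : |η| * m - k * x ≤ |η * m - c * (k * x)| := by
    calc |η| * m - k * x ≤ |η * m| - |c * (k * x)| := by
          rw [abs_mul, abs_of_nonneg (sqrt_nonneg _), abs_mul, abs_of_nonneg (mul_nonneg hk0 hx0)]
          nlinarith [mul_nonneg hk0 hx0]
      _ ≤ _ := abs_sub_abs_le_abs_sub _ _
  nlinarith [mul_nonneg (abs_nonneg η) (sqrt_nonneg (1 - (k * x) ^ 2)),
    mul_nonneg (mul_nonneg (sq_nonneg k) hx0) (sq_nonneg (2 * x - 1))]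

/-- With `0 < k < 1/√2`, a unit vector `u`, and the warped
attitude `Γ(R) = R 𝓡(2 arcsin(k |R|_I²), u)`, setting
`α₁ = (1 − k² − k√(1 − k²))/2` and `α₂ = 1 + k + k²/4`, one has
`α₁ |R|_I² ≤ 1 − √(1 − |Γ(R)|_I²) ≤ α₂ |R|_I²` for all `R ∈ SO(3)`. -/
theorem stmt12 (k : ℝ) (hk0 : 0 < k) (hk : k < 1 / Real.sqrt 2)
    (u : Fin 3 → ℝ) (hu : norm2 u = 1)
    (R : Matrix (Fin 3) (Fin 3) ℝ) (hR : SO3 R) :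
    (1 - k ^ 2 - k * Real.sqrt (1 - k ^ 2)) / 2 * attDist2 R ≤
        1 - Real.sqrt (1 - attDist2 (R * rodrigues (2 * Real.arcsin (k * attDist2 R)) u)) ∧
      1 - Real.sqrt (1 - attDist2 (R * rodrigues (2 * Real.arcsin (k * attDist2 R)) u)) ≤
        (1 + k + k ^ 2 / 4) * attDist2 R := by
  obtain ⟨η, c, hη, hc, hΓ⟩ := hR.exists_one_sub_attDist2_mul_rodrigues hu
  have hx0 : 0 ≤ attDist2 R := (sq_nonneg c).trans hc
  have hx1 : attDist2 R ≤ 1 := by linarith [sq_nonneg η]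
  have hk2 : 2 * k ^ 2 < 1 := by
    have h : k * √2 < 1 := (lt_div_iff₀ (sqrt_pos.mpr two_pos)).mp hk
    nlinarith [sq_sqrt zero_le_two, mul_nonneg hk0.le (sqrt_nonneg 2)]
  have hk1 : k ≤ 1 := by nlinarith
  rw [hΓ, cos_arcsin, sin_arcsin (by nlinarith) (mul_le_one₀ hk1 hx0 hx1), sqrt_sq_eq_abs]
  exact ⟨quadratic_lower_bound hk0.le hk2.le hη hc, quadratic_upper_bound hk0.le hk1 hη hc⟩
end

section
/- Let {u₁, u₂, u₃} be an orthonormal set in ℝ³ with u₄ := −u₁, u₅ := −u₂, u₆ := −u₃, let 0 < k < 1/√2, and let (η, ε) ∈ ℝ × ℝ³ with η² + ‖ε‖² = 1. For m ∈ {1, …, 6}, define η_m := η √(1 − k²‖ε‖⁴) − k ‖ε‖² (ε · u_m). If η_q = 0 for some q ∈ {1, …, 6}, then max over m ∈ {1, …, 6} of |η_m| ≥ (−1 + √(1 + 4k²))^{3/2} / (2√6 k²). -/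
/-!
Write `s = ‖ε‖²` and `cᵢ = ε · uᵢ`, so that `c₁² + c₂² + c₃² = s`. Since `η_m` and `η_{m+3}`
differ only in the sign of `k s c_m`, the maximum of the `|η_m|` is at least every `k s |cᵢ|`,
hence its square is at least `k² s³ / 3`. Squaring the singular condition and using `η² = 1 − s`,
`c_q² ≤ s` gives `1 ≤ s + k² s²`, i.e. `s` is at least the positive root
`(−1 + √(1 + 4k²)) / (2k²)` of `k² s² + s − 1`; substituting this into `k² s³ / 3` gives the bound.
-/

open Matrix

noncomputable section

lemma abs_le_of_abs_sub_le_of_abs_add_le {x y M : ℝ} (h₁ : |x - y| ≤ M) (h₂ : |x + y| ≤ M) :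
    |y| ≤ M := by
  rw [abs_le] at *
  constructor <;> linarith

lemma dotp_neg (x y : Fin 3 → ℝ) : dotp x (-y) = -dotp x y := by
  simp [dotp]

lemma Matrix.mulVec_dotProduct_mulVec_self {n R : Type*} [Fintype n] [DecidableEq n] [CommRing R]
    {U : Matrix n n R} (hU : U * Uᵀ = 1) (x : n → R) : U *ᵥ x ⬝ᵥ U *ᵥ x = x ⬝ᵥ x := by
  rw [dotProduct_mulVec, ← vecMul_transpose, vecMul_vecMul, mul_eq_one_comm.mp hU, vecMul_one]

lemma sum_sq_dotp_of_orthonormal {u1 u2 u3 : Fin 3 → ℝ}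
    (h1 : norm2 u1 = 1) (h2 : norm2 u2 = 1) (h3 : norm2 u3 = 1)
    (h12 : dotp u1 u2 = 0) (h13 : dotp u1 u3 = 0) (h23 : dotp u2 u3 = 0) (x : Fin 3 → ℝ) :
    dotp x u1 ^ 2 + dotp x u2 ^ 2 + dotp x u3 ^ 2 = norm2 x := by
  have hU : of ![u1, u2, u3] * (of ![u1, u2, u3])ᵀ = 1 := by
    ext i j
    simp only [norm2, dotp] at h1 h2 h3 h12 h13 h23
    fin_cases i <;> fin_cases j <;> simp [mul_apply', dotProduct, mul_comm, *]
  have := Matrix.mulVec_dotProduct_mulVec_self hU x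
  simpa [norm2, dotp, dotProduct, Fin.sum_univ_three, mulVec, sq, mul_comm] using this

lemma one_le_add_mul_sq_of_mul_sqrt_eq {η s k c : ℝ} (hη : η ^ 2 + s = 1) (hs : 0 ≤ s)
    (hc : c ^ 2 ≤ s) (h : η * √(1 - k ^ 2 * s ^ 2) = k * s * c) : 1 ≤ s + k ^ 2 * s ^ 2 := by
  rcases le_or_gt (1 - k ^ 2 * s ^ 2) 0 with hneg | hpos
  · linarith
  have hsq : (1 - s) * (1 - k ^ 2 * s ^ 2) = (k * s) ^ 2 * c ^ 2 := by
    rw [show 1 - s = η ^ 2 by linarith, ← Real.sq_sqrt hpos.le, ← mul_pow, h]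
    ring
  nlinarith [mul_le_mul_of_nonneg_left hc (sq_nonneg (k * s))]

lemma neg_one_add_sqrt_le {k s : ℝ} (hs : 0 ≤ s) (h : 1 ≤ s + k ^ 2 * s ^ 2) :
    -1 + √(1 + 4 * k ^ 2) ≤ 2 * k ^ 2 * s := by
  have : √(1 + 4 * k ^ 2) ≤ 1 + 2 * k ^ 2 * s :=
    Real.sqrt_le_iff.mpr ⟨by positivity, by nlinarith⟩
  linarith

lemma rpow_three_halves_div_le {k s t M : ℝ} (ht : 0 ≤ t) (hts : t ≤ 2 * k ^ 2 * s)
    (hM : 0 ≤ M) (hsM : k ^ 2 * s ^ 2 * s ≤ 3 * M ^ 2) :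
    t ^ ((3 : ℝ) / 2) / (2 * √6 * k ^ 2) ≤ M := by
  rw [← pow_le_pow_iff_left₀ (by positivity) hM two_ne_zero, div_pow, mul_pow, mul_pow,
    Real.sq_sqrt (by norm_num), ← Real.rpow_mul_natCast ht]
  rw [show (3 : ℝ) / 2 * (2 : ℕ) = (3 : ℕ) by norm_num, Real.rpow_natCast]
  apply div_le_of_le_mul₀ (by positivity) (by positivity)
  calc t ^ 3 ≤ (2 * k ^ 2 * s) ^ 3 := pow_le_pow_left₀ ht hts 3
    _ = 8 * k ^ 4 * (k ^ 2 * s ^ 2 * s) := by ring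
    _ ≤ 8 * k ^ 4 * (3 * M ^ 2) := by gcongr
    _ = M ^ 2 * (2 ^ 2 * 6 * (k ^ 2) ^ 2) := by ring

lemma abs_mul_dotp_le_sup' (a y : ℝ) (ε u1 u2 u3 : Fin 3 → ℝ) (i : Fin 3) :
    |y * dotp ε (![u1, u2, u3] i)| ≤ Finset.univ.sup' Finset.univ_nonempty (fun m : Fin 6 =>
      |a - y * dotp ε (![u1, u2, u3, -u1, -u2, -u3] m)|) := by
  have hle := fun m => Finset.le_sup' (fun m : Fin 6 =>
    |a - y * dotp ε (![u1, u2, u3, -u1, -u2, -u3] m)|) (Finset.mem_univ m)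
  have hle3 := hle 3
  have hle4 := hle 4
  have hle5 := hle 5
  simp only [Matrix.cons_val, dotp_neg, mul_neg, sub_neg_eq_add] at hle3 hle4 hle5
  match i with
  | 0 => exact abs_le_of_abs_sub_le_of_abs_add_le (hle 0) hle3
  | 1 => exact abs_le_of_abs_sub_le_of_abs_add_le (hle 1) hle4
  | 2 => exact abs_le_of_abs_sub_le_of_abs_add_le (hle 2) hle5

theorem stmt17_general (u1 u2 u3 : Fin 3 → ℝ)
    (h1 : norm2 u1 = 1) (h2 : norm2 u2 = 1) (h3 : norm2 u3 = 1)
    (h12 : dotp u1 u2 = 0) (h13 : dotp u1 u3 = 0) (h23 : dotp u2 u3 = 0)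
    (k η : ℝ) (ε : Fin 3 → ℝ) (hq : η ^ 2 + norm2 ε = 1)
    (q : Fin 6)
    (hsing : η * Real.sqrt (1 - k ^ 2 * norm2 ε ^ 2) -
        k * norm2 ε * dotp ε (![u1, u2, u3, -u1, -u2, -u3] q) = 0) :
    (-1 + Real.sqrt (1 + 4 * k ^ 2)) ^ ((3 : ℝ) / 2) / (2 * Real.sqrt 6 * k ^ 2) ≤
      Finset.univ.sup' Finset.univ_nonempty (fun m : Fin 6 =>
        |η * Real.sqrt (1 - k ^ 2 * norm2 ε ^ 2) -
          k * norm2 ε * dotp ε (![u1, u2, u3, -u1, -u2, -u3] m)|) := by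
  have hparseval := sum_sq_dotp_of_orthonormal h1 h2 h3 h12 h13 h23 ε
  set s := norm2 ε
  set M := Finset.univ.sup' Finset.univ_nonempty (fun m : Fin 6 =>
    |η * √(1 - k ^ 2 * s ^ 2) - k * s * dotp ε (![u1, u2, u3, -u1, -u2, -u3] m)|)
  have hs : 0 ≤ s := hparseval ▸ by positivity
  have hq_le : dotp ε (![u1, u2, u3, -u1, -u2, -u3] q) ^ 2 ≤ s := by
    fin_cases q <;> simp only [Fin.reduceFinMk, Matrix.cons_val, dotp_neg, neg_sq] <;>
      nlinarith [sq_nonneg (dotp ε u1), sq_nonneg (dotp ε u2), sq_nonneg (dotp ε u3)]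
  have hs_large : 1 ≤ s + k ^ 2 * s ^ 2 :=
    one_le_add_mul_sq_of_mul_sqrt_eq hq hs hq_le (sub_eq_zero.mp hsing)
  have hc (i : Fin 3) := abs_mul_dotp_le_sup' (η * √(1 - k ^ 2 * s ^ 2)) (k * s) ε u1 u2 u3 i
  have hM : 0 ≤ M := (abs_nonneg _).trans (hc 0)
  have hsq (i : Fin 3) : (k * s * dotp ε (![u1, u2, u3] i)) ^ 2 ≤ M ^ 2 :=
    sq_abs (k * s * _) ▸ pow_le_pow_left₀ (abs_nonneg _) (hc i) 2
  have hsM : k ^ 2 * s ^ 2 * s ≤ 3 * M ^ 2 := by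
    have := add_le_add (add_le_add (hsq 0) (hsq 1)) (hsq 2)
    simp only [Matrix.cons_val] at this
    linear_combination this - k ^ 2 * s ^ 2 * hparseval
  refine rpow_three_halves_div_le ?_ (neg_one_add_sqrt_le hs hs_large) hM hsM
  linarith [Real.one_le_sqrt.mpr (by nlinarith : (1 : ℝ) ≤ 1 + 4 * k ^ 2)]

/-- With `{u₁,u₂,u₃}` orthonormal, `u_{m+3} = −u_m`,
`0 < k < 1/√2`, a unit quaternion `(η, ε)` and
`η_m = η √(1 − k²‖ε‖⁴) − k ‖ε‖² (ε · u_m)`, if `η_q = 0` for some `q`, then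
`max_m |η_m| ≥ (−1 + √(1 + 4k²))^{3/2} / (2√6 k²)`. -/
theorem stmt17 (u1 u2 u3 : Fin 3 → ℝ)
    (h1 : norm2 u1 = 1) (h2 : norm2 u2 = 1) (h3 : norm2 u3 = 1)
    (h12 : dotp u1 u2 = 0) (h13 : dotp u1 u3 = 0) (h23 : dotp u2 u3 = 0)
    (k η : ℝ) (ε : Fin 3 → ℝ) (hq : η ^ 2 + norm2 ε = 1)
    (hk0 : 0 < k) (hk : k < 1 / Real.sqrt 2)
    (q : Fin 6)
    (hsing : η * Real.sqrt (1 - k ^ 2 * norm2 ε ^ 2) -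
        k * norm2 ε * dotp ε (![u1, u2, u3, -u1, -u2, -u3] q) = 0) :
    (-1 + Real.sqrt (1 + 4 * k ^ 2)) ^ ((3 : ℝ) / 2) / (2 * Real.sqrt 6 * k ^ 2) ≤
      Finset.univ.sup' Finset.univ_nonempty (fun m : Fin 6 =>
        |η * Real.sqrt (1 - k ^ 2 * norm2 ε ^ 2) -
          k * norm2 ε * dotp ε (![u1, u2, u3, -u1, -u2, -u3] m)|) :=
  stmt17_general u1 u2 u3 h1 h2 h3 h12 h13 h23 k η ε hq q hsing
end
end
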